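/- arXiv:1512.06040 — 2 statements merged into one kernel-verified Lean document; each statement's English description precedes it below -/
import Mathlib

section
/- Let E be a finite set and {v_e}_{e ∈ E} a family of vectors in ℝ^d. For each v ∈ ℝ^d define the sign vector λ_v ∈ {-,0,+}^E by λ_v(e) = sign⟨v_e, v⟩. Then the pair (E, {λ_v : v ∈ ℝ^d}) satisfies the covector axioms of an oriented matroid. -/
namespace OM3

variable {E : Type*}

/-- Composition of sign vectors. -/
def comp (l m : E → SignType) : E → SignType := fun e => if l e ≠ 0 then l e else m e

/-- The separation set of two sign vectors. -/
def sep (l m : E → SignType) : Set E := {f | l f = -(m f) ∧ l f ≠ 0}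

private lemma sign_add_of_abs_lt {x y : ℝ} (h : |y| < |x|) :
    SignType.sign (x + y) = SignType.sign x := by
  rcases lt_trichotomy x 0 with hx | hx | hx
  · rw [abs_of_neg hx] at h
    have hy := le_abs_self y
    rw [sign_neg (by linarith), sign_neg hx]
  · subst hx
    simp only [abs_zero] at h
    exact absurd h (abs_nonneg y).not_gt
  · rw [abs_of_pos hx] at h
    have hy := neg_abs_le y
    rw [sign_pos (by linarith), sign_pos hx]

private lemma exists_eps {E : Type*} [Fintype E] (A B : E → ℝ) :
    ∃ ε : ℝ, 0 < ε ∧ ∀ f, A f ≠ 0 → |ε * B f| < |A f| := by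
  classical
  by_cases hS : (Finset.univ.filter fun f => A f ≠ 0).Nonempty
  · set g : E → ℝ := fun f => |A f| / (|B f| + 1) with hg
    set ε := (Finset.univ.filter fun f => A f ≠ 0).inf' hS g with hε
    have hεpos : 0 < ε := by
      rw [hε, Finset.lt_inf'_iff]
      intro f hf
      have h1 : A f ≠ 0 := (Finset.mem_filter.mp hf).2
      have h2 : 0 < |A f| := abs_pos.mpr h1
      have h3 : (0:ℝ) ≤ |B f| := abs_nonneg _
      positivity
    refine ⟨ε, hεpos, fun f hf => ?_⟩
    have hmem : f ∈ Finset.univ.filter fun f => A f ≠ 0 :=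
      Finset.mem_filter.mpr ⟨Finset.mem_univ f, hf⟩
    have hle : ε ≤ g f := Finset.inf'_le g hmem
    have hB : (0:ℝ) ≤ |B f| := abs_nonneg _
    have hA : 0 < |A f| := abs_pos.mpr hf
    rw [abs_mul, abs_of_pos hεpos]
    calc ε * |B f| ≤ g f * |B f| := mul_le_mul_of_nonneg_right hle hB
      _ < |A f| := by
          rw [hg]
          rw [div_mul_eq_mul_div, div_lt_iff₀ (by linarith)]
          nlinarith
  · refine ⟨1, one_pos, fun f hf => absurd ?_ hS⟩
    exact ⟨f, Finset.mem_filter.mpr ⟨Finset.mem_univ f, hf⟩⟩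

/-- the sign vectors `λ_w (e) = sign⟨v_e, w⟩`, for `w ∈ ℝ^d`, satisfy the
covector axioms (L0)–(L3) of an oriented matroid. -/
theorem realizable_covector_axioms {E : Type*} [Fintype E] (d : ℕ)
    (v : E → (Fin d → ℝ)) :
    (fun _ => (0 : SignType)) ∈
        {l : E → SignType | ∃ w : Fin d → ℝ, l = fun e => SignType.sign (∑ i, v e i * w i)} ∧
    (∀ l ∈ {l : E → SignType | ∃ w : Fin d → ℝ,
        l = fun e => SignType.sign (∑ i, v e i * w i)},
      (fun e => -(l e)) ∈ {l : E → SignType | ∃ w : Fin d → ℝ,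
        l = fun e => SignType.sign (∑ i, v e i * w i)}) ∧
    (∀ l ∈ {l : E → SignType | ∃ w : Fin d → ℝ,
        l = fun e => SignType.sign (∑ i, v e i * w i)},
     ∀ m ∈ {l : E → SignType | ∃ w : Fin d → ℝ,
        l = fun e => SignType.sign (∑ i, v e i * w i)},
      comp l m ∈ {l : E → SignType | ∃ w : Fin d → ℝ,
        l = fun e => SignType.sign (∑ i, v e i * w i)}) ∧
    (∀ l ∈ {l : E → SignType | ∃ w : Fin d → ℝ,
        l = fun e => SignType.sign (∑ i, v e i * w i)},
     ∀ m ∈ {l : E → SignType | ∃ w : Fin d → ℝ,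
        l = fun e => SignType.sign (∑ i, v e i * w i)},
     ∀ e ∈ sep l m,
      ∃ n ∈ {l : E → SignType | ∃ w : Fin d → ℝ,
        l = fun e => SignType.sign (∑ i, v e i * w i)},
        n e = 0 ∧ ∀ f ∉ sep l m, n f = comp l m f) := by
  classical
  have key : ∀ (u w : Fin d → ℝ) (c c' : ℝ) (f : E),
      (∑ i, v f i * (c * u i + c' * w i)) =
        c * (∑ i, v f i * u i) + c' * (∑ i, v f i * w i) := by
    intro u w c c' f
    rw [Finset.mul_sum, Finset.mul_sum, ← Finset.sum_add_distrib]
    exact Finset.sum_congr rfl fun i _ => by ring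
  refine ⟨⟨0, ?_⟩, ?_, ?_, ?_⟩
  · funext e; simp
  · rintro l ⟨u, rfl⟩
    refine ⟨-u, ?_⟩
    funext e
    have h : ∑ i, v e i * (-u) i = -∑ i, v e i * u i := by
      rw [← Finset.sum_neg_distrib]
      exact Finset.sum_congr rfl fun i _ => by simp
    show -SignType.sign (∑ i, v e i * u i) = SignType.sign (∑ i, v e i * (-u) i)
    rw [h, Left.sign_neg]
  · rintro l ⟨u, rfl⟩ m ⟨w, rfl⟩
    obtain ⟨ε, hε, hεlt⟩ := exists_eps (fun f => ∑ i, v f i * u i) (fun f => ∑ i, v f i * w i)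
    refine ⟨fun i => u i + ε * w i, ?_⟩
    funext f
    show (if SignType.sign (∑ i, v f i * u i) ≠ 0 then SignType.sign (∑ i, v f i * u i)
        else SignType.sign (∑ i, v f i * w i)) =
      SignType.sign (∑ i, v f i * (u i + ε * w i))
    have hsum : (∑ i, v f i * (u i + ε * w i)) =
        (∑ i, v f i * u i) + ε * (∑ i, v f i * w i) := by
      have := key u w 1 ε f; simpa using this
    rw [hsum]
    by_cases hAf : (∑ i, v f i * u i) = 0
    · rw [if_neg (by simp [hAf]), hAf, zero_add, sign_mul, sign_pos hε, one_mul]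
    · rw [if_pos (by simpa [sign_eq_zero_iff] using hAf),
        sign_add_of_abs_lt (hεlt f hAf)]
  · rintro l ⟨u, rfl⟩ m ⟨w, rfl⟩ e he
    have h1 : SignType.sign (∑ i, v e i * u i) = -SignType.sign (∑ i, v e i * w i) := he.1
    have h2 : SignType.sign (∑ i, v e i * u i) ≠ 0 := he.2
    have hAe : (∑ i, v e i * u i) ≠ 0 := by simpa [sign_eq_zero_iff] using h2
    have hBe : (∑ i, v e i * w i) ≠ 0 := by
      intro h
      rw [h, sign_zero, neg_zero] at h1
      exact h2 h1
    have hBepos : 0 < |∑ i, v e i * w i| := abs_pos.mpr hBe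
    have hAepos : 0 < |∑ i, v e i * u i| := abs_pos.mpr hAe
    have hopp : |∑ i, v e i * w i| * (∑ i, v e i * u i)
        + |∑ i, v e i * u i| * (∑ i, v e i * w i) = 0 := by
      rcases hAe.lt_or_gt with ha | ha
      · have hb : 0 < (∑ i, v e i * w i) := by
          rcases hBe.lt_or_gt with hb | hb
          · rw [sign_neg ha, sign_neg hb] at h1; simp at h1
          · exact hb
        rw [abs_of_pos hb, abs_of_neg ha]; ring
      · have hb : (∑ i, v e i * w i) < 0 := by
          rcases hBe.lt_or_gt with hb | hb
          · exact hb
          · rw [sign_pos ha, sign_pos hb] at h1; simp at h1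
        rw [abs_of_neg hb, abs_of_pos ha]; ring
    refine ⟨fun f => SignType.sign (∑ i, v f i *
        (|∑ i, v e i * w i| * u i + |∑ i, v e i * u i| * w i)),
      ⟨fun i => |∑ i, v e i * w i| * u i + |∑ i, v e i * u i| * w i, rfl⟩, ?_, ?_⟩
    · show SignType.sign (∑ i, v e i *
        (|∑ i, v e i * w i| * u i + |∑ i, v e i * u i| * w i)) = 0
      rw [key u w _ _ e, sign_eq_zero_iff]
      exact hopp
    · intro f hf
      show SignType.sign (∑ i, v f i *
          (|∑ i, v e i * w i| * u i + |∑ i, v e i * u i| * w i)) =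
        if SignType.sign (∑ i, v f i * u i) ≠ 0 then SignType.sign (∑ i, v f i * u i)
        else SignType.sign (∑ i, v f i * w i)
      rw [key u w _ _ f]
      by_cases hAf : (∑ i, v f i * u i) = 0
      · rw [if_neg (by simp [hAf]), hAf, mul_zero, zero_add, sign_mul, sign_pos hAepos, one_mul]
      · rw [if_pos (by simpa [sign_eq_zero_iff] using hAf)]
        have hnsep : SignType.sign (∑ i, v f i * u i)
            ≠ -SignType.sign (∑ i, v f i * w i) := by
          intro h
          exact hf ⟨h, by simpa [sign_eq_zero_iff] using hAf⟩
        rcases lt_or_gt_of_ne hAf with ha | ha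
        · have hb : (∑ i, v f i * w i) ≤ 0 := by
            by_contra hb
            push_neg at hb
            rw [sign_neg ha, sign_pos hb] at hnsep
            simp at hnsep
          rw [sign_neg ha, sign_neg (by nlinarith)]
        · have hb : 0 ≤ (∑ i, v f i * w i) := by
            by_contra hb
            push_neg at hb
            rw [sign_pos ha, sign_neg hb] at hnsep
            simp at hnsep
          rw [sign_pos ha, sign_pos (by nlinarith)]

end OM3
end

section
/- Let S = k[x_1,…,x_n] and S̃ = k[x_1,…,x_n,y_1,…,y_n] be polynomial rings over a field k. Let I ⊆ S̃ be a squarefree monomial ideal such that (a) no minimal monomial generator of I is divisible by x_i·y_i for any i, and (b) no associated prime of S̃/I contains both x_i and y_i for any i. Then for each i, the element x_i − y_i is a nonzerodivisor on S̃/I. -/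
/-!
Write `P_T` for the prime ideal spanned by the variables indexed by `T`. A squarefree monomial
ideal `I` lies in `P_T` exactly when `T` meets the support of every generator, and for a minimal
such `T` the prime `P_T` is a minimal prime of `I`, hence an associated prime of `S̃/I`. Every
monomial of `S̃` outside `I` avoids some minimal `T`, so `I` is the intersection of these `P_T`.
Now `xᵢ - yᵢ ∈ P_T` forces `xᵢ, yᵢ ∈ P_T`, which (b) excludes; so if `(xᵢ - yᵢ) z ∈ I ⊆ P_T`,
primality gives `z ∈ P_T` for every minimal `T`, that is, `z ∈ I`.
-/

open MvPolynomial

theorem Finsupp.sum_single_one_le_iff {σ : Type*} {s : Finset σ} {m : σ →₀ ℕ} :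
    ∑ j ∈ s, Finsupp.single j 1 ≤ m ↔ ∀ j ∈ s, m j ≠ 0 := by
  classical
  simp only [Finsupp.le_def, Finset.sum_apply', Finsupp.single_apply, Finset.sum_ite_eq']
  refine ⟨fun h j hj => ?_, fun h j => ?_⟩
  · simpa [hj, Nat.one_le_iff_ne_zero] using h j
  · split_ifs with hj
    · exact Nat.one_le_iff_ne_zero.mpr (h j hj)
    · exact Nat.zero_le _

def IsTransversal {σ : Type*} (G : Set (Finset σ)) (T : Set σ) : Prop :=
  ∀ s ∈ G, ∃ j ∈ s, j ∈ T

namespace MvPolynomial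

variable {σ R : Type*}

section CommRing

variable [CommRing R]

noncomputable def killVars (s : Set σ) : MvPolynomial σ R →ₐ[R] MvPolynomial σ R :=
  aeval (sᶜ.indicator X)

theorem sub_killVars_mem_span_X_image (s : Set σ) (p : MvPolynomial σ R) :
    p - killVars s p ∈ Ideal.span (X '' s) := by
  induction p using MvPolynomial.induction_on with
  | C a => simp [killVars]
  | add p q hp hq => simpa [add_sub_add_comm] using add_mem hp hq
  | mul_X p j hp =>
    by_cases hj : j ∈ s
    · have hX : killVars s (X j : MvPolynomial σ R) = 0 := by
        simp [killVars, Set.indicator_of_notMem (Set.notMem_compl_iff.mpr hj)]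
      rw [map_mul, hX, mul_zero, sub_zero]
      exact Ideal.mul_mem_left _ _ (Ideal.subset_span ⟨j, hj, rfl⟩)
    · have hX : killVars s (X j : MvPolynomial σ R) = X j := by
        simp [killVars, Set.indicator_of_mem (Set.mem_compl hj)]
      rw [map_mul, hX, ← sub_mul]
      exact Ideal.mul_mem_right _ _ hp

theorem ker_killVars (s : Set σ) :
    RingHom.ker (killVars s : MvPolynomial σ R →ₐ[R] MvPolynomial σ R) =
      Ideal.span (X '' s) := by
  refine le_antisymm (fun p hp => ?_) ?_
  · simpa [(RingHom.mem_ker).mp hp] using sub_killVars_mem_span_X_image s p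
  · rw [Ideal.span_le]
    rintro _ ⟨j, hj, rfl⟩
    simp [killVars, Set.indicator_of_notMem (Set.notMem_compl_iff.mpr hj)]

theorem isPrime_span_X_image [IsDomain R] (s : Set σ) :
    (Ideal.span (X '' s) : Ideal (MvPolynomial σ R)).IsPrime :=
  ker_killVars (R := R) s ▸ RingHom.ker_isPrime _

theorem X_mem_span_X_image_iff [Nontrivial R] {s : Set σ} {j : σ} :
    (X j : MvPolynomial σ R) ∈ Ideal.span (X '' s) ↔ j ∈ s := by
  simp [mem_ideal_span_X_image, support_X, Finsupp.single_apply_eq_zero]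

theorem X_sub_X_mem_span_X_image_iff [Nontrivial R] {s : Set σ} {a b : σ} (hab : a ≠ b) :
    (X a - X b : MvPolynomial σ R) ∈ Ideal.span (X '' s) ↔ a ∈ s ∧ b ∈ s := by
  classical
  refine ⟨fun h => ?_, fun ⟨ha, hb⟩ =>
    sub_mem (X_mem_span_X_image_iff.mpr ha) (X_mem_span_X_image_iff.mpr hb)⟩
  have hmem : ∀ c ∈ ({a, b} : Set σ), c ∈ s := by
    rintro c hc
    obtain ⟨i, hi, hci⟩ := mem_ideal_span_X_image.mp h (Finsupp.single c 1) (by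
      rcases hc with rfl | rfl <;> simp [coeff_X, Finsupp.single_left_inj, hab, hab.symm])
    obtain rfl := (Finsupp.single_apply_ne_zero.mp hci).1
    exact hi
  exact ⟨hmem a (by simp), hmem b (by simp)⟩

end CommRing

variable (R) in
noncomputable def squarefreeMonomialIdeal [CommSemiring R] (G : Set (Finset σ)) :
    Ideal (MvPolynomial σ R) :=
  Ideal.span ((fun s : Finset σ => ∏ j ∈ s, X j) '' G)

section CommSemiring

variable [CommSemiring R] {G : Set (Finset σ)}

theorem mem_squarefreeMonomialIdeal_iff {z : MvPolynomial σ R} :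
    z ∈ squarefreeMonomialIdeal R G ↔ ∀ m ∈ z.support, ∃ s ∈ G, ∀ j ∈ s, m j ≠ 0 := by
  have hgen : (fun s : Finset σ => ∏ j ∈ s, (X j : MvPolynomial σ R)) =
      (fun m => monomial m 1) ∘ fun s => ∑ j ∈ s, Finsupp.single j 1 := by
    ext1 s
    exact (monomial_sum_one s fun j => Finsupp.single j 1).symm
  simp only [squarefreeMonomialIdeal, hgen, Set.image_comp, mem_ideal_span_monomial_image,
    Set.exists_mem_image, Finsupp.sum_single_one_le_iff]

theorem squarefreeMonomialIdeal_le_span_X_image {T : Set σ} (hT : IsTransversal G T) :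
    squarefreeMonomialIdeal R G ≤ Ideal.span (X '' T) := by
  rw [squarefreeMonomialIdeal, Ideal.span_le]
  rintro _ ⟨s, hs, rfl⟩
  obtain ⟨j, hjs, hjT⟩ := hT s hs
  exact Ideal.prod_mem _ hjs (Ideal.subset_span ⟨j, hjT, rfl⟩)

theorem isTransversal_setOf_X_mem {q : Ideal (MvPolynomial σ R)} [q.IsPrime]
    (hq : squarefreeMonomialIdeal R G ≤ q) : IsTransversal G {j | X j ∈ q} :=
  fun s hs => Ideal.IsPrime.prod_mem_iff.mp (hq (Ideal.subset_span ⟨s, hs, rfl⟩))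

theorem mem_squarefreeMonomialIdeal_of_forall_minimal [Finite σ] {z : MvPolynomial σ R}
    (h : ∀ T, Minimal (IsTransversal G) T → z ∈ Ideal.span (X '' T)) :
    z ∈ squarefreeMonomialIdeal R G := by
  refine mem_squarefreeMonomialIdeal_iff.mpr fun m hm => ?_
  by_contra! hcover
  obtain ⟨T, hT0, hT⟩ := exists_minimal_le_of_wellFoundedLT (IsTransversal G) {j | m j = 0} hcover
  obtain ⟨i, hi, hmi⟩ := mem_ideal_span_X_image.mp (h T hT) m hm
  exact hmi (hT0 hi)

end CommSemiring

section IsDomain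

variable [CommRing R] [IsDomain R] {G : Set (Finset σ)} {T : Set σ}

theorem span_X_image_mem_minimalPrimes (hT : Minimal (IsTransversal G) T) :
    Ideal.span (X '' T) ∈ (squarefreeMonomialIdeal R G).minimalPrimes := by
  refine ⟨⟨isPrime_span_X_image T, squarefreeMonomialIdeal_le_span_X_image hT.prop⟩,
    fun q ⟨_, hIq⟩ hqT => ?_⟩
  have hT_le : T ≤ {j | X j ∈ q} :=
    hT.le_of_le (isTransversal_setOf_X_mem hIq) fun j hj => X_mem_span_X_image_iff.mp (hqT hj)
  rw [Ideal.span_le]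
  rintro _ ⟨j, hj, rfl⟩
  exact hT_le hj

theorem span_X_image_mem_associatedPrimes [Finite σ] [IsNoetherianRing R]
    (hT : Minimal (IsTransversal G) T) :
    Ideal.span (X '' T) ∈ associatedPrimes (MvPolynomial σ R)
      (MvPolynomial σ R ⧸ squarefreeMonomialIdeal R G) :=
  Module.associatedPrimes.minimalPrimes_annihilator_subset_associatedPrimes _ _ <| by
    rw [Ideal.annihilator_quotient]
    exact span_X_image_mem_minimalPrimes hT

theorem mem_squarefreeMonomialIdeal_of_mul_mem [Finite σ] {r z : MvPolynomial σ R}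
    (hr : ∀ T, Minimal (IsTransversal G) T → r ∉ Ideal.span (X '' T))
    (hrz : r * z ∈ squarefreeMonomialIdeal R G) : z ∈ squarefreeMonomialIdeal R G :=
  mem_squarefreeMonomialIdeal_of_forall_minimal fun T hT =>
    ((isPrime_span_X_image T).mem_or_mem (squarefreeMonomialIdeal_le_span_X_image hT.prop hrz)
      ).resolve_left (hr T hT)

end IsDomain

end MvPolynomial

theorem sub_isSMulRegular_of_squarefree_monomial_ideal_general
    {k : Type*} [Field k] {n : ℕ}
    (G : Finset (Finset (Fin n ⊕ Fin n)))
    (I : Ideal (MvPolynomial (Fin n ⊕ Fin n) k))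
    (hI : I = Ideal.span ((fun s : Finset (Fin n ⊕ Fin n) =>
      ∏ j ∈ s, (X j : MvPolynomial (Fin n ⊕ Fin n) k)) '' G))
    (hass : ∀ p ∈ associatedPrimes (MvPolynomial (Fin n ⊕ Fin n) k)
        (MvPolynomial (Fin n ⊕ Fin n) k ⧸ I),
      ∀ i : Fin n, ¬ ((X (Sum.inl i) : MvPolynomial (Fin n ⊕ Fin n) k) ∈ p ∧
        (X (Sum.inr i) : MvPolynomial (Fin n ⊕ Fin n) k) ∈ p)) :
    ∀ i : Fin n, ∀ z : MvPolynomial (Fin n ⊕ Fin n) k,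
      (X (Sum.inl i) - X (Sum.inr i)) * z ∈ I → z ∈ I := by
  intro i z hz
  subst hI
  refine mem_squarefreeMonomialIdeal_of_mul_mem (fun T hT hmem => ?_) hz
  rw [X_sub_X_mem_span_X_image_iff Sum.inl_ne_inr] at hmem
  exact hass _ (span_X_image_mem_associatedPrimes hT) i
    ⟨X_mem_span_X_image_iff.mpr hmem.1, X_mem_span_X_image_iff.mpr hmem.2⟩

/-- for a squarefree monomial ideal `I ⊆ k[x₁,…,xₙ,y₁,…,yₙ]` such that no
generator is divisible by `xᵢyᵢ` and no associated prime of `S̃/I` contains both `xᵢ`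
and `yᵢ`, each `xᵢ − yᵢ` is a nonzerodivisor on `S̃/I`. -/
theorem sub_isSMulRegular_of_squarefree_monomial_ideal
    {k : Type*} [Field k] {n : ℕ}
    (G : Finset (Finset (Fin n ⊕ Fin n)))
    (I : Ideal (MvPolynomial (Fin n ⊕ Fin n) k))
    (hI : I = Ideal.span ((fun s : Finset (Fin n ⊕ Fin n) =>
      ∏ j ∈ s, (X j : MvPolynomial (Fin n ⊕ Fin n) k)) '' G))
    (hgen : ∀ s ∈ G, ∀ i : Fin n, ¬ (Sum.inl i ∈ s ∧ Sum.inr i ∈ s))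
    (hass : ∀ p ∈ associatedPrimes (MvPolynomial (Fin n ⊕ Fin n) k)
        (MvPolynomial (Fin n ⊕ Fin n) k ⧸ I),
      ∀ i : Fin n, ¬ ((X (Sum.inl i) : MvPolynomial (Fin n ⊕ Fin n) k) ∈ p ∧
        (X (Sum.inr i) : MvPolynomial (Fin n ⊕ Fin n) k) ∈ p)) :
    ∀ i : Fin n, ∀ z : MvPolynomial (Fin n ⊕ Fin n) k,
      (X (Sum.inl i) - X (Sum.inr i)) * z ∈ I → z ∈ I :=
  sub_isSMulRegular_of_squarefree_monomial_ideal_general G I hI hass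
end
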